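/- arXiv:1805.03554 — 5 statements merged into one kernel-verified Lean document; each statement's English description precedes it below -/
import Mathlib

section
/- Minimax optimality of the mixture likelihood ratio test: with Q₀ := ∑_{σ ∈ S} P_{0;σ} and Q₁ := ∑_{σ ∈ S} P_{1;σ} (finite sums over the finite set S), assume Q₁ ≪ Q₀ and let ℓ := Q₁.rnDeriv Q₀. For t ∈ ℝ≥0∞ and γ ∈ [0,1] define the test φ* by φ*(x) = 1 if ℓ(x) > t, φ*(x) = γ if ℓ(x) = t, and φ*(x) = 0 if ℓ(x) < t. Then for every test ψ with P_F(ψ) ≤ P_F(φ*), one has P_M(ψ) ≥ P_M(φ*). -/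
open MeasureTheory
open scoped ENNReal BigOperators

noncomputable def labelSet {ι : Type*} {n : ℕ} (ν : Fin n → ι) : Finset (Fin n → ι) :=
  letI := Classical.decEq (Fin n → ι)
  Finset.univ.image (fun π : Equiv.Perm (Fin n) => ν ∘ ⇑π)

noncomputable def prodM {X ι : Type*} [MeasurableSpace X] (μ : ι → Measure X) {n : ℕ}
    (σ : Fin n → ι) : Measure (Fin n → X) :=
  Measure.pi fun j => μ (σ j)

noncomputable def PF {X ι : Type*} [MeasurableSpace X] (μ₀ : ι → Measure X) {n : ℕ}
    (ν : Fin n → ι) (ψ : (Fin n → X) → ℝ) : ℝ :=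
  ⨆ σ ∈ labelSet ν, ∫ x, ψ x ∂(prodM μ₀ σ)

noncomputable def PM {X ι : Type*} [MeasurableSpace X] (μ₁ : ι → Measure X) {n : ℕ}
    (ν : Fin n → ι) (ψ : (Fin n → X) → ℝ) : ℝ :=
  ⨆ σ ∈ labelSet ν, ∫ x, (1 - ψ x) ∂(prodM μ₁ σ)

noncomputable def mixM {X ι : Type*} [MeasurableSpace X] (μ : ι → Measure X) {n : ℕ}
    (ν : Fin n → ι) : Measure (Fin n → X) :=
  ∑ σ ∈ labelSet ν, prodM μ σ

/-! The likelihood ratio `ℓ = dQ₁/dQ₀` of the two mixtures is invariant under permutations of the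
coordinates, because both mixtures are. Hence so is `φ*`, and its errors under `P_{i;σ}` do not
depend on `σ ∈ S`: its worst-case errors are its errors under the mixtures, divided by `|S|`. For
any test `ψ` the mixture errors are at most `|S|` times the worst-case ones, so `P_F(ψ) ≤ P_F(φ*)`
gives `∫ ψ dQ₀ ≤ ∫ φ* dQ₀`, and the Neyman–Pearson lemma for `Q₀` against `Q₁` turns this into
`∫ (1 - φ*) dQ₁ ≤ ∫ (1 - ψ) dQ₁`. -/

def IsTest {α : Type*} [MeasurableSpace α] (ψ : α → ℝ) : Prop :=
  Measurable ψ ∧ ∀ x, ψ x ∈ Set.Icc 0 1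

namespace IsTest

variable {α : Type*} [MeasurableSpace α] {ψ : α → ℝ}

lemma integrable (hψ : IsTest ψ) (μ : Measure α) [IsFiniteMeasure μ] : Integrable ψ μ :=
  .of_mem_Icc 0 1 hψ.1.aemeasurable (ae_of_all _ hψ.2)

lemma one_sub (hψ : IsTest ψ) : IsTest fun x => 1 - ψ x :=
  ⟨measurable_const.sub hψ.1, fun x => ⟨by linarith [(hψ.2 x).2], by linarith [(hψ.2 x).1]⟩⟩

lemma integral_nonneg (hψ : IsTest ψ) (μ : Measure α) : 0 ≤ ∫ x, ψ x ∂μ :=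
  MeasureTheory.integral_nonneg fun x => (hψ.2 x).1

end IsTest

lemma Finset.le_ciSup_of_mem {ι α : Type*} [ConditionallyCompleteLinearOrder α] (s : Finset ι)
    (f : ι → α) {i : ι} (hi : i ∈ s) : f i ≤ ⨆ j ∈ s, f j := by
  classical
  have hbdd : BddAbove (Set.range fun j => ⨆ _ : j ∈ s, f j) := by
    refine (insert (sSup ∅) (s.image f)).bddAbove.mono ?_
    rintro _ ⟨j, rfl⟩
    by_cases hj : j ∈ s
    · simpa [ciSup_pos hj] using Or.inr ⟨j, hj, rfl⟩
    · simp [ciSup_neg hj]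
  exact le_ciSup_of_le hbdd i (ciSup_pos (f := fun _ => f i) hi).ge

lemma Finset.ciSup_eq_of_forall_eq {ι α : Type*} [ConditionallyCompleteLinearOrder α]
    {s : Finset ι} (hs : s.Nonempty) {f : ι → α} {c : α} (hc : sSup ∅ ≤ c) (hf : ∀ i ∈ s, f i = c) :
    ⨆ i ∈ s, f i = c := by
  -- `sSup ∅` is the value of the empty inner supremum `⨆ _ : i ∈ s` for `i ∉ s`.
  obtain ⟨i, hi, hfi⟩ := Finset.mem_image.1 <|
    s.ciSup_mem_image f (hs.exists_mem.imp fun i hi => ⟨hi, (hf i hi).symm ▸ hc⟩)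
  rw [← hfi, hf i hi]

lemma Finset.sum_le_card_mul_ciSup {ι : Type*} (s : Finset ι) (f : ι → ℝ) :
    ∑ i ∈ s, f i ≤ s.card * ⨆ i ∈ s, f i := by
  simpa using s.sum_le_card_nsmul f _ fun i hi => s.le_ciSup_of_mem f hi

def permCoords {α X : Type*} [MeasurableSpace X] (e : Equiv.Perm α) : (α → X) ≃ᵐ (α → X) :=
  MeasurableEquiv.piCongrLeft (fun _ => X) e.symm

@[simp]
lemma permCoords_apply {α X : Type*} [MeasurableSpace X] (e : Equiv.Perm α) (x : α → X) :
    permCoords e x = x ∘ e := by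
  funext j
  simpa [permCoords] using
    MeasurableEquiv.piCongrLeft_apply_apply (β := fun _ : α => X) e.symm x (e j)

lemma map_permCoords_pi {α X : Type*} [Fintype α] [MeasurableSpace X] (μ : α → Measure X)
    [∀ j, SigmaFinite (μ j)] (e : Equiv.Perm α) :
    (Measure.pi μ).map (permCoords e) = Measure.pi fun j => μ (e j) := by
  simpa [permCoords] using (measurePreserving_piCongrLeft (fun j => μ (e j)) e.symm).map_eq

lemma rnDeriv_comp_ae_eq_of_map_eq {α : Type*} [MeasurableSpace α] {μ ν : Measure α}
    [SigmaFinite μ] [SigmaFinite ν] (e : α ≃ᵐ α) (hμ : μ.map e = μ) (hν : ν.map e = ν) :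
    (fun x => μ.rnDeriv ν (e x)) =ᵐ[ν] μ.rnDeriv ν := by
  simpa [hμ, hν] using e.measurableEmbedding.rnDeriv_map μ ν

section Mixture

variable {X ι : Type*} [MeasurableSpace X] {n : ℕ}

lemma mem_labelSet {ν σ : Fin n → ι} : σ ∈ labelSet ν ↔ ∃ π : Equiv.Perm (Fin n), ν ∘ π = σ := by
  classical
  simp [labelSet]

lemma self_mem_labelSet (ν : Fin n → ι) : ν ∈ labelSet ν :=
  mem_labelSet.2 ⟨1, rfl⟩

lemma comp_perm_mem_labelSet {ν σ : Fin n → ι} (e : Equiv.Perm (Fin n)) (hσ : σ ∈ labelSet ν) :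
    σ ∘ e ∈ labelSet ν := by
  obtain ⟨π, rfl⟩ := mem_labelSet.1 hσ
  exact mem_labelSet.2 ⟨e.trans π, rfl⟩

instance (μ : ι → Measure X) [∀ i, IsProbabilityMeasure (μ i)] (σ : Fin n → ι) :
    IsProbabilityMeasure (prodM μ σ) := by
  unfold prodM; infer_instance

instance (μ : ι → Measure X) [∀ i, IsProbabilityMeasure (μ i)] (ν : Fin n → ι) :
    IsFiniteMeasure (mixM μ ν) := by
  unfold mixM; infer_instance

lemma prodM_absolutelyContinuous_mixM (μ : ι → Measure X) {ν σ : Fin n → ι}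
    (hσ : σ ∈ labelSet ν) : prodM μ σ ≪ mixM μ ν :=
  Measure.absolutelyContinuous_of_le (Finset.single_le_sum (fun _ _ => Measure.zero_le _) hσ)

lemma map_permCoords_prodM (μ : ι → Measure X) [∀ i, IsProbabilityMeasure (μ i)]
    (σ : Fin n → ι) (e : Equiv.Perm (Fin n)) :
    (prodM μ σ).map (permCoords e) = prodM μ (σ ∘ e) :=
  map_permCoords_pi _ e

lemma map_permCoords_mixM (μ : ι → Measure X) [∀ i, IsProbabilityMeasure (μ i)]
    (ν : Fin n → ι) (e : Equiv.Perm (Fin n)) :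
    (mixM μ ν).map (permCoords e) = mixM μ ν := by
  rw [mixM, ← Measure.mapₗ_apply_of_measurable (permCoords e).measurable, map_sum]
  simp_rw [Measure.mapₗ_apply_of_measurable (permCoords e).measurable, map_permCoords_prodM]
  exact Finset.sum_nbij' (· ∘ e) (· ∘ e.symm) (fun σ hσ => comp_perm_mem_labelSet e hσ)
    (fun σ hσ => comp_perm_mem_labelSet e.symm hσ) (fun σ _ => by ext; simp)
    (fun σ _ => by ext; simp) (fun _ _ => rfl)

lemma integral_prodM_eq_of_ae_invariant (μ : ι → Measure X) [∀ i, IsProbabilityMeasure (μ i)]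
    {ν σ : Fin n → ι} (hσ : σ ∈ labelSet ν) {f : (Fin n → X) → ℝ} (hf : Measurable f)
    (hinv : ∀ e : Equiv.Perm (Fin n), f ∘ permCoords e =ᵐ[mixM μ ν] f) :
    ∫ x, f x ∂prodM μ σ = ∫ x, f x ∂prodM μ ν := by
  obtain ⟨π, rfl⟩ := mem_labelSet.1 hσ
  rw [← map_permCoords_prodM, integral_map (permCoords π).measurable.aemeasurable
    hf.aestronglyMeasurable]
  exact integral_congr_ae <|
    (prodM_absolutelyContinuous_mixM μ (self_mem_labelSet ν)).ae_le (hinv π)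

lemma integral_mixM (μ : ι → Measure X) [∀ i, IsProbabilityMeasure (μ i)] (ν : Fin n → ι)
    {f : (Fin n → X) → ℝ} (hf : IsTest f) :
    ∫ x, f x ∂mixM μ ν = ∑ σ ∈ labelSet ν, ∫ x, f x ∂prodM μ σ :=
  integral_finsetSum_measure fun _ _ => hf.integrable _

lemma integral_mixM_le_card_mul_ciSup (μ : ι → Measure X) [∀ i, IsProbabilityMeasure (μ i)]
    (ν : Fin n → ι) {f : (Fin n → X) → ℝ} (hf : IsTest f) :
    ∫ x, f x ∂mixM μ ν ≤ (labelSet ν).card * ⨆ σ ∈ labelSet ν, ∫ x, f x ∂prodM μ σ :=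
  integral_mixM μ ν hf ▸ Finset.sum_le_card_mul_ciSup _ _

lemma card_mul_ciSup_eq_integral_mixM (μ : ι → Measure X) [∀ i, IsProbabilityMeasure (μ i)]
    (ν : Fin n → ι) {f : (Fin n → X) → ℝ} (hf : IsTest f)
    (hinv : ∀ e : Equiv.Perm (Fin n), f ∘ permCoords e =ᵐ[mixM μ ν] f) :
    (labelSet ν).card * ⨆ σ ∈ labelSet ν, ∫ x, f x ∂prodM μ σ = ∫ x, f x ∂mixM μ ν := by
  have hconst σ (hσ : σ ∈ labelSet ν) := integral_prodM_eq_of_ae_invariant μ hσ hf.1 hinv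
  rw [integral_mixM μ ν hf, Finset.sum_congr rfl hconst, Finset.sum_const, nsmul_eq_mul,
    Finset.ciSup_eq_of_forall_eq ⟨ν, self_mem_labelSet ν⟩ (by simpa using hf.integral_nonneg _)
      hconst]

end Mixture

section LikelihoodRatio

variable {α : Type*}

noncomputable def lrtTest (ℓ : α → ℝ≥0∞) (t : ℝ≥0∞) (γ : ℝ) (x : α) : ℝ :=
  if t < ℓ x then 1 else if ℓ x = t then γ else 0

lemma eq_lrtTest {ℓ : α → ℝ≥0∞} {t : ℝ≥0∞} {γ : ℝ} {φ : α → ℝ}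
    (h1 : ∀ x, t < ℓ x → φ x = 1) (hγ : ∀ x, ℓ x = t → φ x = γ) (h0 : ∀ x, ℓ x < t → φ x = 0) :
    φ = lrtTest ℓ t γ := by
  funext x
  rcases lt_trichotomy (ℓ x) t with h | h | h
  · simp [lrtTest, h0 x h, h.not_gt, h.ne]
  · simp [lrtTest, hγ x h, h]
  · simp [lrtTest, h1 x h, h]

lemma isTest_lrtTest [MeasurableSpace α] {ℓ : α → ℝ≥0∞} (hℓ : Measurable ℓ) (t : ℝ≥0∞) {γ : ℝ}
    (hγ : γ ∈ Set.Icc 0 1) : IsTest (lrtTest ℓ t γ) := by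
  refine ⟨Measurable.ite (measurableSet_lt measurable_const hℓ) measurable_const
    (Measurable.ite (hℓ (measurableSet_singleton t)) measurable_const measurable_const),
    fun x => ?_⟩
  unfold lrtTest
  split_ifs <;> simp [hγ.1, hγ.2]

lemma mul_sub_toReal_nonneg_of_threshold {a t : ℝ≥0∞} {p q : ℝ} (ha : a ≠ ∞) (ht : t ≠ ∞)
    (hq : q ∈ Set.Icc 0 1) (h1 : t < a → p = 1) (h0 : a < t → p = 0) :
    0 ≤ (p - q) * (a.toReal - t.toReal) := by
  rcases lt_trichotomy a t with h | rfl | h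
  · rw [h0 h]
    exact mul_nonneg_of_nonpos_of_nonpos (by linarith [hq.1])
      (sub_nonpos.2 (ENNReal.toReal_mono ht h.le))
  · simp
  · rw [h1 h]
    exact mul_nonneg (by linarith [hq.2]) (sub_nonneg.2 (ENNReal.toReal_mono ha h.le))

theorem neyman_pearson [MeasurableSpace α] {Q₀ Q₁ : Measure α} [IsFiniteMeasure Q₀]
    [IsFiniteMeasure Q₁] (hac : Q₁ ≪ Q₀) {t : ℝ≥0∞} {φ ψ : α → ℝ} (hφ : IsTest φ) (hψ : IsTest ψ)
    (h1 : ∀ x, t < Q₁.rnDeriv Q₀ x → φ x = 1) (h0 : ∀ x, Q₁.rnDeriv Q₀ x < t → φ x = 0)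
    (hle : ∫ x, ψ x ∂Q₀ ≤ ∫ x, φ x ∂Q₀) :
    ∫ x, ψ x ∂Q₁ ≤ ∫ x, φ x ∂Q₁ := by
  rcases eq_or_ne t ∞ with rfl | ht
  · have hφ0 : φ =ᵐ[Q₀] 0 := by
      filter_upwards [Q₁.rnDeriv_lt_top Q₀] with x hx using h0 x hx
    have hψ0 : ψ =ᵐ[Q₀] 0 := by
      refine (integral_eq_zero_iff_of_nonneg (fun x => (hψ.2 x).1) (hψ.integrable Q₀)).1 ?_
      exact le_antisymm (by simpa [integral_congr_ae hφ0] using hle) (hψ.integral_nonneg Q₀)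
    rw [integral_congr_ae (hac.ae_le hφ0), integral_congr_ae (hac.ae_le hψ0)]
  · have hdiff : Integrable (fun x => φ x - ψ x) Q₀ := (hφ.integrable Q₀).sub (hψ.integrable Q₀)
    have hweighted : Integrable (fun x => (Q₁.rnDeriv Q₀ x).toReal * (φ x - ψ x)) Q₀ := by
      refine Measure.integrable_toReal_rnDeriv.mul_bdd (c := 1) hdiff.1 (ae_of_all _ fun x => ?_)
      obtain ⟨hφx₀, hφx₁⟩ := hφ.2 x
      obtain ⟨hψx₀, hψx₁⟩ := hψ.2 x
      exact abs_sub_le_iff.2 ⟨by linarith, by linarith⟩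
    have hpointwise : 0 ≤ ∫ x, (φ x - ψ x) * ((Q₁.rnDeriv Q₀ x).toReal - t.toReal) ∂Q₀ :=
      integral_nonneg_of_ae <| by
        filter_upwards [Q₁.rnDeriv_lt_top Q₀] with x hx
        exact mul_sub_toReal_nonneg_of_threshold hx.ne ht (hψ.2 x) (h1 x) (h0 x)
    have hrn : ∫ x, (Q₁.rnDeriv Q₀ x).toReal * (φ x - ψ x) ∂Q₀ = ∫ x, (φ x - ψ x) ∂Q₁ := by
      simpa using integral_rnDeriv_smul hac (f := fun x => φ x - ψ x)
    have hsplit : ∫ x, (φ x - ψ x) * ((Q₁.rnDeriv Q₀ x).toReal - t.toReal) ∂Q₀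
        = ∫ x, (φ x - ψ x) ∂Q₁ - t.toReal * ∫ x, (φ x - ψ x) ∂Q₀ := by
      rw [← hrn, ← integral_const_mul, ← integral_sub hweighted (hdiff.const_mul _)]
      congr 1 with x
      ring
    rw [integral_sub (hφ.integrable Q₀) (hψ.integrable Q₀)] at hsplit
    rw [hsplit, integral_sub (hφ.integrable Q₁) (hψ.integrable Q₁)] at hpointwise
    nlinarith [ENNReal.toReal_nonneg (a := t)]

end LikelihoodRatio

theorem mixture_lrt_minimax_optimal
    {X ι : Type*} [MeasurableSpace X]
    (μ₀ μ₁ : ι → Measure X)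
    [∀ i, IsProbabilityMeasure (μ₀ i)] [∀ i, IsProbabilityMeasure (μ₁ i)]
    {n : ℕ} (ν : Fin n → ι)
    (hac : mixM μ₁ ν ≪ mixM μ₀ ν)
    (t : ℝ≥0∞) (γ : ℝ) (hγ0 : 0 ≤ γ) (hγ1 : γ ≤ 1)
    (φ : (Fin n → X) → ℝ)
    (hφ1 : ∀ x, t < (mixM μ₁ ν).rnDeriv (mixM μ₀ ν) x → φ x = 1)
    (hφγ : ∀ x, (mixM μ₁ ν).rnDeriv (mixM μ₀ ν) x = t → φ x = γ)
    (hφ0 : ∀ x, (mixM μ₁ ν).rnDeriv (mixM μ₀ ν) x < t → φ x = 0)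
    (ψ : (Fin n → X) → ℝ) (hψmeas : Measurable ψ)
    (hψ0 : ∀ x, 0 ≤ ψ x) (hψ1 : ∀ x, ψ x ≤ 1)
    (hPF : PF μ₀ ν ψ ≤ PF μ₀ ν φ) :
    PM μ₁ ν ψ ≥ PM μ₁ ν φ := by
  have hφ : φ = lrtTest _ t γ := eq_lrtTest hφ1 hφγ hφ0
  have hφtest : IsTest φ := hφ ▸ isTest_lrtTest (Measure.measurable_rnDeriv _ _) t ⟨hγ0, hγ1⟩
  have hψtest : IsTest ψ := ⟨hψmeas, fun x => ⟨hψ0 x, hψ1 x⟩⟩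
  have hinv₀ (e : Equiv.Perm (Fin n)) : φ ∘ permCoords e =ᵐ[mixM μ₀ ν] φ := by
    filter_upwards [rnDeriv_comp_ae_eq_of_map_eq (permCoords e) (map_permCoords_mixM μ₁ ν e)
      (map_permCoords_mixM μ₀ ν e)] with x hx
    simp only [hφ, Function.comp_apply, lrtTest, hx]
  have hinv₁ (e : Equiv.Perm (Fin n)) :
      (fun x => 1 - φ x) ∘ permCoords e =ᵐ[mixM μ₁ ν] fun x => 1 - φ x :=
    ((hinv₀ e).filter_mono hac.ae_le).fun_comp (1 - ·)
  have hcard : (0 : ℝ) < (labelSet ν).card := by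
    exact_mod_cast Finset.card_pos.2 ⟨ν, self_mem_labelSet ν⟩
  have hsize : ∫ x, ψ x ∂mixM μ₀ ν ≤ ∫ x, φ x ∂mixM μ₀ ν :=
    calc ∫ x, ψ x ∂mixM μ₀ ν ≤ (labelSet ν).card * PF μ₀ ν ψ :=
          integral_mixM_le_card_mul_ciSup μ₀ ν hψtest
      _ ≤ (labelSet ν).card * PF μ₀ ν φ := by gcongr
      _ = ∫ x, φ x ∂mixM μ₀ ν := card_mul_ciSup_eq_integral_mixM μ₀ ν hφtest hinv₀
  have hpower := neyman_pearson hac hφtest hψtest hφ1 hφ0 hsize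
  refine le_of_mul_le_mul_left ?_ hcard
  calc (labelSet ν).card * PM μ₁ ν φ = ∫ x, 1 - φ x ∂mixM μ₁ ν :=
        card_mul_ciSup_eq_integral_mixM μ₁ ν hφtest.one_sub hinv₁
    _ ≤ ∫ x, 1 - ψ x ∂mixM μ₁ ν := by
        rw [integral_sub (integrable_const 1) (hφtest.integrable _),
          integral_sub (integrable_const 1) (hψtest.integrable _)]
        linarith
    _ ≤ (labelSet ν).card * PM μ₁ ν ψ := integral_mixM_le_card_mul_ciSup μ₁ ν hψtest.one_sub
end

section
/- Symmetrization never hurts (Lemma 2, existential form): for every test ψ there exists a symmetric test φ (i.e. φ(x ∘ τ) = φ(x) for all x and all τ : Equiv.Perm (Fin n)) such that P_F(φ) ≤ P_F(ψ) and P_M(φ) ≤ P_M(ψ). -/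
set_option maxHeartbeats 1000000


open MeasureTheory
open scoped ENNReal BigOperators

section Aux

variable {X ι : Type*} [MeasurableSpace X] {n : ℕ}

lemma permMap_coe (τ : Equiv.Perm (Fin n)) :
    ⇑(MeasurableEquiv.piCongrLeft (fun _ : Fin n => X) τ.symm)
      = fun (x : Fin n → X) (j : Fin n) => x (τ j) := by
  funext x j
  rw [MeasurableEquiv.coe_piCongrLeft]
  have h : j = τ.symm (τ j) := (Equiv.symm_apply_apply τ j).symm
  conv_lhs => rw [h]
  rw [Equiv.piCongrLeft_apply_apply]

lemma permMap_measurable (τ : Equiv.Perm (Fin n)) :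
    Measurable (fun (x : Fin n → X) (j : Fin n) => x (τ j)) :=
  measurable_pi_lambda _ fun j => measurable_pi_apply _

lemma perm_measurePreserving (μ : ι → Measure X) [∀ i, SigmaFinite (μ i)]
    (σ : Fin n → ι) (τ : Equiv.Perm (Fin n)) :
    MeasurePreserving (fun (x : Fin n → X) (j : Fin n) => x (τ j))
      (prodM μ σ) (prodM μ (fun j => σ (τ j))) := by
  have h := MeasureTheory.measurePreserving_piCongrLeft
    (fun j : Fin n => μ (σ (τ j))) τ.symm
  rw [permMap_coe] at h
  simpa [prodM, Equiv.apply_symm_apply] using h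

lemma perm_integral (μ : ι → Measure X) [∀ i, SigmaFinite (μ i)]
    (σ : Fin n → ι) (τ : Equiv.Perm (Fin n))
    (g : (Fin n → X) → ℝ) (hg : Measurable g) :
    ∫ x, g (fun j => x (τ j)) ∂(prodM μ σ) = ∫ x, g x ∂(prodM μ (fun j => σ (τ j))) := by
  rw [← (perm_measurePreserving μ σ τ).map_eq,
    integral_map (permMap_measurable τ).aemeasurable hg.aestronglyMeasurable]

lemma comp_mem_labelSet {ν σ : Fin n → ι} (hσ : σ ∈ labelSet ν) (τ : Equiv.Perm (Fin n)) :
    (fun j => σ (τ j)) ∈ labelSet ν := by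
  classical
  simp only [labelSet, Finset.mem_image, Finset.mem_univ, true_and] at hσ ⊢
  obtain ⟨π, hπ⟩ := hσ
  exact ⟨τ.trans π, by funext j; simp [← hπ]⟩

lemma integrable_of_bdd {μ : Measure (Fin n → X)} [IsProbabilityMeasure μ]
    {g : (Fin n → X) → ℝ} (hg : Measurable g) (h0 : ∀ x, 0 ≤ g x) (h1 : ∀ x, g x ≤ 1) :
    Integrable g μ := by
  refine (integrable_const (1 : ℝ)).mono' hg.aestronglyMeasurable ?_
  filter_upwards with x
  rw [Real.norm_eq_abs, abs_le]
  exact ⟨by linarith [h0 x], h1 x⟩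

lemma integral_le_PF (μ : ι → Measure X) [∀ i, IsProbabilityMeasure (μ i)]
    (ν : Fin n → ι) {σ : Fin n → ι} (hσ : σ ∈ labelSet ν)
    {g : (Fin n → X) → ℝ} (hg : Measurable g) (h0 : ∀ x, 0 ≤ g x) (h1 : ∀ x, g x ≤ 1) :
    ∫ x, g x ∂(prodM μ σ) ≤ PF μ ν g := by
  have hle1 : ∀ σ' : Fin n → ι, (⨆ _ : σ' ∈ labelSet ν, ∫ x, g x ∂(prodM μ σ')) ≤ 1 := by
    intro σ'
    refine Real.iSup_le (fun _ => ?_) zero_le_one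
    have : IsProbabilityMeasure (prodM μ σ') := by
      unfold prodM; infer_instance
    calc ∫ x, g x ∂(prodM μ σ') ≤ ∫ _, (1 : ℝ) ∂(prodM μ σ') :=
          integral_mono (integrable_of_bdd hg h0 h1) (integrable_const 1) h1
      _ = 1 := by simp
  have hbdd : BddAbove (Set.range fun σ' => ⨆ _ : σ' ∈ labelSet ν, ∫ x, g x ∂(prodM μ σ')) :=
    ⟨1, Set.forall_mem_range.2 hle1⟩
  calc ∫ x, g x ∂(prodM μ σ)
      = ⨆ _ : σ ∈ labelSet ν, ∫ x, g x ∂(prodM μ σ) :=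
        (ciSup_pos (f := fun _ : σ ∈ labelSet ν => ∫ x, g x ∂(prodM μ σ)) hσ).symm
    _ ≤ PF μ ν g := le_ciSup hbdd σ

lemma PF_nonneg (μ : ι → Measure X) (ν : Fin n → ι)
    {g : (Fin n → X) → ℝ} (h0 : ∀ x, 0 ≤ g x) : 0 ≤ PF μ ν g :=
  Real.iSup_nonneg fun _ => Real.iSup_nonneg fun _ => integral_nonneg h0

lemma sym_PF_le (μ : ι → Measure X) [∀ i, IsProbabilityMeasure (μ i)]
    (ν : Fin n → ι) {g : (Fin n → X) → ℝ} (hg : Measurable g)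
    (h0 : ∀ x, 0 ≤ g x) (h1 : ∀ x, g x ≤ 1) :
    PF μ ν (fun x => (∑ τ : Equiv.Perm (Fin n), g (fun j => x (τ j)))
        / (Fintype.card (Equiv.Perm (Fin n)) : ℝ)) ≤ PF μ ν g := by
  set N : ℝ := (Fintype.card (Equiv.Perm (Fin n)) : ℝ) with hN
  have hNpos : (0 : ℝ) < N := by positivity
  refine Real.iSup_le (fun σ => Real.iSup_le (fun hσ => ?_) (PF_nonneg μ ν h0)) (PF_nonneg μ ν h0)
  have : IsProbabilityMeasure (prodM μ σ) := by unfold prodM; infer_instance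
  have hint : ∀ τ : Equiv.Perm (Fin n),
      Integrable (fun x => g (fun j => x (τ j))) (prodM μ σ) :=
    fun τ => integrable_of_bdd (hg.comp (permMap_measurable τ))
      (fun x => h0 _) (fun x => h1 _)
  have hsum : ∫ x, (∑ τ : Equiv.Perm (Fin n), g (fun j => x (τ j))) / N ∂(prodM μ σ)
      = (∑ τ : Equiv.Perm (Fin n), ∫ x, g (fun j => x (τ j)) ∂(prodM μ σ)) / N := by
    rw [integral_div, integral_finset_sum _ fun τ _ => hint τ]
  rw [hsum, div_le_iff₀ hNpos]
  calc (∑ τ : Equiv.Perm (Fin n), ∫ x, g (fun j => x (τ j)) ∂(prodM μ σ))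
      ≤ ∑ _τ : Equiv.Perm (Fin n), PF μ ν g := by
        refine Finset.sum_le_sum fun τ _ => ?_
        rw [perm_integral μ σ τ g hg]
        exact integral_le_PF μ ν (comp_mem_labelSet hσ τ) hg h0 h1
    _ = PF μ ν g * N := by
        rw [Finset.sum_const, Finset.card_univ, nsmul_eq_mul, hN, mul_comm]

end Aux

theorem symmetrization_never_hurts
    {X ι : Type*} [MeasurableSpace X]
    (μ₀ μ₁ : ι → Measure X)
    [∀ i, IsProbabilityMeasure (μ₀ i)] [∀ i, IsProbabilityMeasure (μ₁ i)]
    {n : ℕ} (ν : Fin n → ι)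
    (ψ : (Fin n → X) → ℝ) (hψmeas : Measurable ψ)
    (hψ0 : ∀ x, 0 ≤ ψ x) (hψ1 : ∀ x, ψ x ≤ 1) :
    ∃ φ : (Fin n → X) → ℝ, Measurable φ ∧ (∀ x, 0 ≤ φ x) ∧ (∀ x, φ x ≤ 1) ∧
      (∀ (x : Fin n → X) (τ : Equiv.Perm (Fin n)), φ (fun j => x (τ j)) = φ x) ∧
      PF μ₀ ν φ ≤ PF μ₀ ν ψ ∧ PM μ₁ ν φ ≤ PM μ₁ ν ψ := by
  classical
  have hNpos : (0 : ℝ) < (Fintype.card (Equiv.Perm (Fin n)) : ℝ) := by positivity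
  refine ⟨fun x => (∑ τ : Equiv.Perm (Fin n), ψ (fun j => x (τ j)))
      / (Fintype.card (Equiv.Perm (Fin n)) : ℝ), ?_, ?_, ?_, ?_, ?_, ?_⟩
  · apply Measurable.div_const
    exact Finset.measurable_sum _ fun τ _ => hψmeas.comp (permMap_measurable τ)
  · intro x
    exact div_nonneg (Finset.sum_nonneg fun τ _ => hψ0 _) hNpos.le
  · intro x
    rw [div_le_one hNpos]
    calc (∑ τ : Equiv.Perm (Fin n), ψ (fun j => x (τ j)))
        ≤ ∑ _τ : Equiv.Perm (Fin n), (1 : ℝ) := Finset.sum_le_sum fun τ _ => hψ1 _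
      _ = (Fintype.card (Equiv.Perm (Fin n)) : ℝ) := by simp
  · intro x τ
    show (∑ τ' : Equiv.Perm (Fin n), ψ fun j => x (τ (τ' j)))
          / (Fintype.card (Equiv.Perm (Fin n)) : ℝ)
        = (∑ τ' : Equiv.Perm (Fin n), ψ fun j => x (τ' j))
          / (Fintype.card (Equiv.Perm (Fin n)) : ℝ)
    congr 1
    exact Fintype.sum_equiv (Equiv.mulLeft τ) _ _ fun τ' => by
      simp [Equiv.Perm.mul_apply]
  · exact sym_PF_le μ₀ ν hψmeas hψ0 hψ1
  · have hone_sub : ∀ x : Fin n → X,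
        1 - (∑ τ : Equiv.Perm (Fin n), ψ (fun j => x (τ j)))
            / (Fintype.card (Equiv.Perm (Fin n)) : ℝ)
        = (∑ τ : Equiv.Perm (Fin n), (fun y => 1 - ψ y) (fun j => x (τ j)))
            / (Fintype.card (Equiv.Perm (Fin n)) : ℝ) := by
      intro x
      simp only
      rw [Finset.sum_sub_distrib, sub_div]
      congr 1
      rw [Finset.sum_const, Finset.card_univ, nsmul_eq_mul, mul_one, div_self hNpos.ne']
    have h1 : PM μ₁ ν (fun x => (∑ τ : Equiv.Perm (Fin n), ψ (fun j => x (τ j)))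
          / (Fintype.card (Equiv.Perm (Fin n)) : ℝ))
        = PF μ₁ ν (fun x => (∑ τ : Equiv.Perm (Fin n), (fun y => 1 - ψ y) (fun j => x (τ j)))
          / (Fintype.card (Equiv.Perm (Fin n)) : ℝ)) := by
      unfold PM PF
      refine iSup_congr fun σ => iSup_congr fun _ => ?_
      exact integral_congr_ae (Filter.Eventually.of_forall fun x => hone_sub x)
    have h2 : PM μ₁ ν ψ = PF μ₁ ν (fun y => 1 - ψ y) := rfl
    rw [h1, h2]
    exact sym_PF_le (g := fun y => 1 - ψ y) μ₁ ν (measurable_const.sub hψmeas)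
      (fun x => by show (0:ℝ) ≤ 1 - ψ x; linarith [hψ1 x])
      (fun x => by show 1 - ψ x ≤ (1:ℝ); linarith [hψ0 x])
end

section
/- Symmetrized test, type-I error: for any test ψ, the symmetrized test φ(x) := (n!)⁻¹ ∑_{τ : Equiv.Perm (Fin n)} ψ(x ∘ τ) satisfies P_F(φ) ≤ P_F(ψ). -/
open MeasureTheory
open scoped ENNReal BigOperators

theorem symmetrized_test_PF_le
    {X ι : Type*} [MeasurableSpace X]
    (μ₀ μ₁ : ι → Measure X)
    [∀ i, IsProbabilityMeasure (μ₀ i)] [∀ i, IsProbabilityMeasure (μ₁ i)]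
    {n : ℕ} (ν : Fin n → ι)
    (ψ : (Fin n → X) → ℝ) (hψmeas : Measurable ψ)
    (hψ0 : ∀ x, 0 ≤ ψ x) (hψ1 : ∀ x, ψ x ≤ 1) :
    PF μ₀ ν (fun x => (Nat.factorial n : ℝ)⁻¹ *
        ∑ τ : Equiv.Perm (Fin n), ψ (fun j => x (τ j))) ≤ PF μ₀ ν ψ := by
  classical
  -- notation
  set g : (Fin n → ι) → ℝ := fun σ => ∫ x, ψ x ∂(prodM μ₀ σ) with hg
  -- integrability of ψ and its permuted versions
  have hperm_meas : ∀ τ : Equiv.Perm (Fin n),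
      Measurable (fun x : Fin n → X => ψ (fun j => x (τ j))) := fun τ =>
    hψmeas.comp (measurable_pi_lambda _ fun j => measurable_pi_apply _)
  have hint : ∀ (μ : Measure (Fin n → X)) [IsProbabilityMeasure μ]
      (f : (Fin n → X) → ℝ), Measurable f → (∀ x, 0 ≤ f x) → (∀ x, f x ≤ 1) →
      Integrable f μ := by
    intro μ _ f hfm hf0 hf1
    refine (integrable_const (1 : ℝ)).mono' hfm.aestronglyMeasurable ?_
    filter_upwards with x
    rw [Real.norm_eq_abs, abs_of_nonneg (hf0 x)]
    exact hf1 x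
  -- the key change of variables
  have hkey : ∀ (σ : Fin n → ι) (τ : Equiv.Perm (Fin n)),
      (∫ x, ψ (fun j => x (τ j)) ∂(prodM μ₀ σ)) = g (σ ∘ τ) := by
    intro σ τ
    have h := (MeasureTheory.measurePreserving_piCongrLeft
      (μ := fun j => μ₀ ((σ ∘ τ) j)) (τ.symm : Fin n ≃ Fin n))
    have hmeq : (Measure.pi fun j => μ₀ ((σ ∘ τ) (τ.symm j))) = prodM μ₀ σ := by
      unfold prodM
      congr 1
      funext j
      simp [Function.comp]
    rw [hmeq] at h
    have := h.integral_comp' (f := MeasurableEquiv.piCongrLeft (fun _ => X) τ.symm) ψ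
    show (∫ x, ψ (fun j => x (τ j)) ∂(prodM μ₀ σ)) =
      ∫ y, ψ y ∂(Measure.pi fun j => μ₀ ((σ ∘ ⇑τ) j))
    rw [← this]
    refine integral_congr_ae (Filter.Eventually.of_forall fun x => ?_)
    show ψ (fun j => x (τ j)) = ψ ((MeasurableEquiv.piCongrLeft (fun _ => X) τ.symm) x)
    congr 1
    funext j
    have h2 := Equiv.piCongrLeft_apply_apply (P := fun _ : Fin n => X)
      (e := (τ.symm : Fin n ≃ Fin n)) x (τ j)
    rw [Equiv.symm_apply_apply] at h2
    exact h2.symm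
  -- closure of labelSet under composition with permutations
  have hmem : ∀ {σ : Fin n → ι}, σ ∈ labelSet ν → ∀ τ : Equiv.Perm (Fin n),
      σ ∘ τ ∈ labelSet ν := by
    intro σ hσ τ
    simp only [labelSet, Finset.mem_image] at hσ ⊢
    rcases hσ with ⟨π, _, rfl⟩
    exact ⟨τ.trans π, Finset.mem_univ _, rfl⟩
  -- probability instances
  have hprob : ∀ σ : Fin n → ι, IsProbabilityMeasure (prodM μ₀ σ) := fun σ => by
    unfold prodM; infer_instance
  -- each g σ for σ ∈ labelSet is in [0,1]
  have hg0 : ∀ σ : Fin n → ι, 0 ≤ g σ := fun σ =>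
    integral_nonneg hψ0
  have hg1 : ∀ σ : Fin n → ι, g σ ≤ 1 := by
    intro σ
    haveI := hprob σ
    calc g σ ≤ ∫ _, (1 : ℝ) ∂(prodM μ₀ σ) :=
          integral_mono (hint _ ψ hψmeas hψ0 hψ1) (integrable_const 1) hψ1
      _ = 1 := by simp
  -- boundedness of the iSup family for ψ
  have hbdd : BddAbove (Set.range fun σ => ⨆ _ : σ ∈ labelSet ν, g σ) := by
    refine ⟨1, ?_⟩
    rintro y ⟨σ, rfl⟩
    exact Real.iSup_le (fun _ => hg1 σ) zero_le_one
  -- PF ψ is nonnegative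
  have hPFnonneg : 0 ≤ PF μ₀ ν ψ := by
    have hνmem : ν ∈ labelSet ν := by
      simp only [labelSet, Finset.mem_image]
      exact ⟨Equiv.refl _, Finset.mem_univ _, by ext j; simp⟩
    have h1 : g ν ≤ PF μ₀ ν ψ := by
      haveI : Nonempty (ν ∈ labelSet ν) := ⟨hνmem⟩
      exact le_ciSup_of_le hbdd ν (le_of_eq (ciSup_const).symm)
    exact le_trans (hg0 ν) h1
  -- each g σ' for σ' ∈ labelSet is ≤ PF ψ
  have hgle : ∀ σ' ∈ labelSet ν, g σ' ≤ PF μ₀ ν ψ := by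
    intro σ' hσ'
    haveI : Nonempty (σ' ∈ labelSet ν) := ⟨hσ'⟩
    exact le_ciSup_of_le hbdd σ' (le_of_eq (ciSup_const).symm)
  -- main bound
  unfold PF
  refine Real.iSup_le (fun σ => ?_) hPFnonneg
  refine Real.iSup_le (fun hσ => ?_) hPFnonneg
  haveI := hprob σ
  have hintτ : ∀ τ : Equiv.Perm (Fin n),
      Integrable (fun x : Fin n → X => ψ (fun j => x (τ j))) (prodM μ₀ σ) :=
    fun τ => hint _ _ (hperm_meas τ) (fun x => hψ0 _) (fun x => hψ1 _)
  calc
    (∫ x, (Nat.factorial n : ℝ)⁻¹ *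
        ∑ τ : Equiv.Perm (Fin n), ψ (fun j => x (τ j)) ∂(prodM μ₀ σ))
      = (Nat.factorial n : ℝ)⁻¹ *
        ∫ x, ∑ τ : Equiv.Perm (Fin n), ψ (fun j => x (τ j)) ∂(prodM μ₀ σ) := by
        exact integral_const_mul _ _
    _ = (Nat.factorial n : ℝ)⁻¹ *
        ∑ τ : Equiv.Perm (Fin n), ∫ x, ψ (fun j => x (τ j)) ∂(prodM μ₀ σ) := by
        rw [integral_finset_sum _ (fun τ _ => hintτ τ)]
    _ = (Nat.factorial n : ℝ)⁻¹ * ∑ τ : Equiv.Perm (Fin n), g (σ ∘ τ) := by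
        simp_rw [hkey σ]
    _ ≤ (Nat.factorial n : ℝ)⁻¹ * ∑ _τ : Equiv.Perm (Fin n), PF μ₀ ν ψ := by
        refine mul_le_mul_of_nonneg_left ?_ (by positivity)
        exact Finset.sum_le_sum fun τ _ => hgle _ (hmem hσ τ)
    _ = PF μ₀ ν ψ := by
        rw [Finset.sum_const, Finset.card_univ, Fintype.card_perm, Fintype.card_fin,
          nsmul_eq_mul, ← mul_assoc, inv_mul_cancel₀
            (by exact_mod_cast (Nat.factorial_pos n).ne'), one_mul]
end

section
/- Symmetrized test, type-II error: for any test ψ, the symmetrized test φ(x) := (n!)⁻¹ ∑_{τ : Equiv.Perm (Fin n)} ψ(x ∘ τ) satisfies P_M(φ) ≤ P_M(ψ). -/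
open MeasureTheory
open scoped ENNReal BigOperators

/-- Change of variables: permuting coordinates. -/
lemma integral_perm_comp {X : Type*} [MeasurableSpace X] {n : ℕ} (m : Fin n → Measure X)
    [∀ j, IsProbabilityMeasure (m j)] (τ : Equiv.Perm (Fin n)) (g : (Fin n → X) → ℝ) :
    ∫ x, g (fun j => x (τ j)) ∂(Measure.pi m) = ∫ x, g x ∂(Measure.pi (fun j => m (τ j))) := by
  have hmp := MeasureTheory.measurePreserving_piCongrLeft
    (μ := fun j => m (τ j)) (α := fun _ : Fin n => X) τ.symm
  have heq : (Measure.pi fun i' => m (τ (τ.symm i'))) = Measure.pi m := by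
    simp
  rw [heq] at hmp
  have hfun : ∀ x : Fin n → X,
      (MeasurableEquiv.piCongrLeft (fun _ : Fin n => X) τ.symm) x = fun j => x (τ j) := by
    intro x
    funext j
    have := MeasurableEquiv.piCongrLeft_apply_apply (τ.symm : Fin n ≃ Fin n)
      (β := fun _ : Fin n => X) x (τ j)
    simpa using this
  have := hmp.integral_comp
    (MeasurableEquiv.piCongrLeft (fun _ : Fin n => X) τ.symm).measurableEmbedding g
  rw [← this]
  simp_rw [hfun]

theorem symmetrized_test_PM_le
    {X ι : Type*} [MeasurableSpace X]
    (μ₀ μ₁ : ι → Measure X)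
    [∀ i, IsProbabilityMeasure (μ₀ i)] [∀ i, IsProbabilityMeasure (μ₁ i)]
    {n : ℕ} (ν : Fin n → ι)
    (ψ : (Fin n → X) → ℝ) (hψmeas : Measurable ψ)
    (hψ0 : ∀ x, 0 ≤ ψ x) (hψ1 : ∀ x, ψ x ≤ 1) :
    PM μ₁ ν (fun x => (Nat.factorial n : ℝ)⁻¹ *
        ∑ τ : Equiv.Perm (Fin n), ψ (fun j => x (τ j))) ≤ PM μ₁ ν ψ := by
  classical
  set S := labelSet ν with hS
  have hprob : ∀ σ : Fin n → ι, IsProbabilityMeasure (prodM μ₁ σ) := fun σ => by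
    unfold prodM; infer_instance
  -- measurability of permuted tests
  have hcm : ∀ τ : Equiv.Perm (Fin n),
      Measurable fun x : Fin n → X => ψ (fun j => x (τ j)) := fun τ =>
    hψmeas.comp (measurable_pi_lambda _ fun j => measurable_pi_apply _)
  -- integrability of 1 - ψ ∘ perm
  have hint : ∀ (σ : Fin n → ι) (τ : Equiv.Perm (Fin n)),
      Integrable (fun x => 1 - ψ (fun j => x (τ j))) (prodM μ₁ σ) := by
    intro σ τ
    haveI := hprob σ
    refine (integrable_const (1 : ℝ)).mono'
      ((measurable_const.sub (hcm τ)).aestronglyMeasurable) ?_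
    filter_upwards with x
    rw [Real.norm_eq_abs, abs_le]
    constructor <;> [linarith [hψ1 (fun j => x (τ j))]; linarith [hψ0 (fun j => x (τ j))]]
  have hint1 : ∀ σ : Fin n → ι, Integrable (fun x => 1 - ψ x) (prodM μ₁ σ) := by
    intro σ
    simpa using hint σ 1
  -- each integral of 1 - ψ is ≤ 1
  have hle1 : ∀ σ : Fin n → ι, ∫ x, (1 - ψ x) ∂(prodM μ₁ σ) ≤ 1 := by
    intro σ
    haveI := hprob σ
    calc ∫ x, (1 - ψ x) ∂(prodM μ₁ σ) ≤ ∫ _, (1 : ℝ) ∂(prodM μ₁ σ) := by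
          refine integral_mono (hint1 σ) (integrable_const 1) fun x => ?_
          linarith [hψ0 x]
      _ = 1 := by simp
  -- the inner-sup function for PM ψ
  set g : (Fin n → ι) → ℝ := fun σ => ⨆ _ : σ ∈ S, ∫ x, (1 - ψ x) ∂(prodM μ₁ σ) with hg
  have hgbdd : BddAbove (Set.range g) := by
    refine ⟨1, ?_⟩
    rintro _ ⟨σ, rfl⟩
    exact Real.iSup_le (fun _ => hle1 σ) zero_le_one
  -- key: membership integrals are ≤ PM ψ
  have key : ∀ σ ∈ S, ∫ x, (1 - ψ x) ∂(prodM μ₁ σ) ≤ PM μ₁ ν ψ := by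
    intro σ hσ
    have h2 : g σ = ∫ x, (1 - ψ x) ∂(prodM μ₁ σ) := by
      simp only [hg]; exact ciSup_pos hσ
    calc ∫ x, (1 - ψ x) ∂(prodM μ₁ σ) = g σ := h2.symm
      _ ≤ ⨆ σ', g σ' := le_ciSup hgbdd σ
      _ = PM μ₁ ν ψ := rfl
  -- closure of labelSet under right composition with a permutation
  have hclosed : ∀ σ ∈ S, ∀ τ : Equiv.Perm (Fin n), σ ∘ τ ∈ S := by
    intro σ hσ τ
    simp only [hS, labelSet, Finset.mem_image, Finset.mem_univ, true_and] at hσ ⊢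
    obtain ⟨π, hπ⟩ := hσ
    exact ⟨π * τ, by rw [← hπ]; rfl⟩
  -- main estimate for each σ ∈ S
  have main : ∀ σ ∈ S,
      (∫ x, (1 - (Nat.factorial n : ℝ)⁻¹ *
        ∑ τ : Equiv.Perm (Fin n), ψ (fun j => x (τ j))) ∂(prodM μ₁ σ)) ≤ PM μ₁ ν ψ := by
    intro σ hσ
    haveI := hprob σ
    have hcard : (Fintype.card (Equiv.Perm (Fin n)) : ℝ) = (Nat.factorial n : ℝ) := by
      rw [Fintype.card_perm, Fintype.card_fin]
    have hfac : (0 : ℝ) < (Nat.factorial n : ℝ) := by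
      exact_mod_cast Nat.factorial_pos n
    have hpt : ∀ x : Fin n → X,
        (1 - (Nat.factorial n : ℝ)⁻¹ * ∑ τ : Equiv.Perm (Fin n), ψ (fun j => x (τ j)))
          = (Nat.factorial n : ℝ)⁻¹ *
            ∑ τ : Equiv.Perm (Fin n), (1 - ψ (fun j => x (τ j))) := by
      intro x
      rw [Finset.sum_sub_distrib]
      simp only [Finset.sum_const, Finset.card_univ, nsmul_eq_mul, mul_one]
      rw [mul_sub, hcard, inv_mul_cancel₀ hfac.ne']
    calc (∫ x, (1 - (Nat.factorial n : ℝ)⁻¹ *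
            ∑ τ : Equiv.Perm (Fin n), ψ (fun j => x (τ j))) ∂(prodM μ₁ σ))
        = (Nat.factorial n : ℝ)⁻¹ *
            ∑ τ : Equiv.Perm (Fin n),
              ∫ x, (1 - ψ (fun j => x (τ j))) ∂(prodM μ₁ σ) := by
          simp_rw [hpt]
          rw [integral_const_mul, integral_finset_sum _ (fun τ _ => hint σ τ)]
      _ = (Nat.factorial n : ℝ)⁻¹ *
            ∑ τ : Equiv.Perm (Fin n), ∫ x, (1 - ψ x) ∂(prodM μ₁ (σ ∘ τ)) := by
          congr 1
          refine Finset.sum_congr rfl fun τ _ => ?_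
          exact integral_perm_comp (fun j => μ₁ (σ j)) τ (fun x => 1 - ψ x)
      _ ≤ (Nat.factorial n : ℝ)⁻¹ *
            ∑ _τ : Equiv.Perm (Fin n), PM μ₁ ν ψ := by
          gcongr with τ _
          exact key _ (hclosed σ hσ τ)
      _ = PM μ₁ ν ψ := by
          simp only [Finset.sum_const, Finset.card_univ, nsmul_eq_mul]
          rw [← mul_assoc, hcard, inv_mul_cancel₀ hfac.ne', one_mul]
  -- PM ψ is nonnegative
  have hPM0 : 0 ≤ PM μ₁ ν ψ := by
    refine Real.iSup_nonneg fun σ => Real.iSup_nonneg fun hσ => ?_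
    haveI := hprob σ
    refine integral_nonneg fun x => ?_
    show (0:ℝ) ≤ 1 - ψ x
    linarith [hψ1 x]
  -- conclude
  refine Real.iSup_le (fun σ => Real.iSup_le (fun hσ => main σ hσ) hPM0) hPM0
end

section
/- Mixture likelihood ratio equals ratio of orbit probabilities (Part 3 of Lemma 1, cross-multiplied form): assume X has measurable singletons. For every σ ∈ S and every x : Fin n → X, letting O_x := {y : Fin n → X | ∃ π : Equiv.Perm (Fin n), y = fun j => x (π j)} denote the orbit of x under coordinate permutations and Q_i := ∑_{σ' ∈ S} P_{i;σ'}, one has P_{1;σ}(O_x) · Q₀({x}) = P_{0;σ}(O_x) · Q₁({x}). -/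
open MeasureTheory Finset
open scoped ENNReal BigOperators

section counting
variable {α : Type*} {n : ℕ}

private lemma fiber_card_eq [DecidableEq (Fin n → α)] (a : Fin n → α) (π₀ : Equiv.Perm (Fin n)) :
    #{π : Equiv.Perm (Fin n) | (fun j => a (π j)) = (fun j => a (π₀ j))}
      = #{π : Equiv.Perm (Fin n) | (fun j => a (π j)) = a} := by
  apply Finset.card_bij' (fun π _ => π * π₀⁻¹) (fun ρ _ => ρ * π₀)
  · intro π hπ
    simp only [mem_filter, mem_univ, true_and] at hπ ⊢
    funext j
    have := congrFun hπ (π₀⁻¹ j)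
    simpa using this
  · intro ρ hρ
    simp only [mem_filter, mem_univ, true_and] at hρ ⊢
    funext j
    have := congrFun hρ (π₀ j)
    simpa using this
  · intro π _; group
  · intro ρ _; group

private lemma sum_perm [DecidableEq (Fin n → α)] (a : Fin n → α) (F : (Fin n → α) → ℝ≥0∞) :
    ∑ π : Equiv.Perm (Fin n), F (fun j => a (π j))
      = (#{π : Equiv.Perm (Fin n) | (fun j => a (π j)) = a} : ℝ≥0∞)
        * ∑ y ∈ univ.image (fun π : Equiv.Perm (Fin n) => fun j => a (π j)), F y := by
  rw [Finset.sum_comp F (fun π : Equiv.Perm (Fin n) => fun j => a (π j)), Finset.mul_sum]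
  apply Finset.sum_congr rfl
  intro y hy
  obtain ⟨π₀, _, rfl⟩ := Finset.mem_image.1 hy
  rw [fiber_card_eq a π₀, nsmul_eq_mul]

end counting

theorem mixture_lr_eq_orbit_ratio
    {X ι : Type*} [MeasurableSpace X] [MeasurableSingletonClass X]
    (μ₀ μ₁ : ι → Measure X)
    [∀ i, IsProbabilityMeasure (μ₀ i)] [∀ i, IsProbabilityMeasure (μ₁ i)]
    {n : ℕ} (ν : Fin n → ι)
    (σ : Fin n → ι) (hσ : σ ∈ labelSet ν) (x : Fin n → X) :
    prodM μ₁ σ {y : Fin n → X | ∃ π : Equiv.Perm (Fin n), y = fun j => x (π j)}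
        * mixM μ₀ ν {x}
      = prodM μ₀ σ {y : Fin n → X | ∃ π : Equiv.Perm (Fin n), y = fun j => x (π j)}
        * mixM μ₁ ν {x} := by
  classical
  set O : Set (Fin n → X) := {y | ∃ π : Equiv.Perm (Fin n), y = fun j => x (π j)} with hOdef
  set Ofin : Finset (Fin n → X) :=
    univ.image (fun π : Equiv.Perm (Fin n) => fun j => x (π j)) with hOfin
  have hO : O = ↑Ofin := by
    ext y
    simp [hOdef, hOfin, eq_comm]
  -- singleton measures of product measures
  have hsing : ∀ (μ : ι → Measure X) [∀ i, IsProbabilityMeasure (μ i)]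
      (σ' : Fin n → ι) (y : Fin n → X), prodM μ σ' {y} = ∏ j, μ (σ' j) {y j} := by
    intro μ _ σ' y
    rw [← Set.univ_pi_singleton y]
    exact Measure.pi_pi _ _
  -- measure of a finite set is the sum of singleton measures
  have hfin : ∀ (m : Measure (Fin n → X)) (s : Finset (Fin n → X)),
      m ↑s = ∑ y ∈ s, m {y} := by
    intro m s
    have := sum_measure_preimage_singleton (μ := m) s (f := id)
      (fun y _ => measurableSet_singleton y)
    simpa using this.symm
  -- the label set is the orbit of σ
  have hls : labelSet ν = Finset.univ.image (fun π : Equiv.Perm (Fin n) => ν ∘ ⇑π) := by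
    unfold labelSet
    congr!
  have hmem : ∀ τ, τ ∈ labelSet ν ↔ ∃ π : Equiv.Perm (Fin n), ν ∘ ⇑π = τ := by
    intro τ
    rw [hls]
    simp [Finset.mem_image]
  obtain ⟨π₀, hπ₀⟩ := (hmem σ).1 hσ
  have him : labelSet ν = univ.image (fun π : Equiv.Perm (Fin n) => fun j => σ (π j)) := by
    ext τ
    rw [hmem, Finset.mem_image]
    constructor
    · rintro ⟨π, rfl⟩
      refine ⟨π₀⁻¹ * π, Finset.mem_univ _, ?_⟩
      funext j
      have := congrFun hπ₀ (π₀⁻¹ (π j))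
      simpa [Function.comp] using this.symm
    · rintro ⟨π, -, rfl⟩
      refine ⟨π₀ * π, ?_⟩
      funext j
      have := congrFun hπ₀ (π j)
      simpa [Function.comp] using this
  set cx : ℕ := #{π : Equiv.Perm (Fin n) | (fun j => x (π j)) = x} with hcx
  set cσ : ℕ := #{π : Equiv.Perm (Fin n) | (fun j => σ (π j)) = σ} with hcσ
  -- the common quantity
  have key : ∀ (μ : ι → Measure X) [∀ i, IsProbabilityMeasure (μ i)],
      (cx : ℝ≥0∞) * prodM μ σ O = (cσ : ℝ≥0∞) * mixM μ ν {x} := by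
    intro μ _
    have h1 : (cx : ℝ≥0∞) * prodM μ σ O
        = ∑ π : Equiv.Perm (Fin n), ∏ j, μ (σ (π j)) {x j} := by
      rw [hO, hfin, ← sum_perm x (fun y => prodM μ σ {y})]
      have step : ∀ π : Equiv.Perm (Fin n),
          prodM μ σ {fun j => x (π j)} = ∏ k, μ (σ (π⁻¹ k)) {x k} := by
        intro π
        rw [hsing]
        exact Fintype.prod_equiv π (fun j => μ (σ j) {x (π j)})
          (fun k => μ (σ (π⁻¹ k)) {x k}) (fun j => by simp)
      simp_rw [step]
      exact Fintype.sum_equiv (Equiv.inv (Equiv.Perm (Fin n))) _ _ (fun π => rfl)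
    have h2 : (cσ : ℝ≥0∞) * mixM μ ν {x}
        = ∑ π : Equiv.Perm (Fin n), ∏ j, μ (σ (π j)) {x j} := by
      have hm : mixM μ ν {x}
          = ∑ σ' ∈ univ.image (fun π : Equiv.Perm (Fin n) => fun j => σ (π j)),
              prodM μ σ' {x} := by
        rw [mixM, Measure.finset_sum_apply, him]
      rw [hm, ← sum_perm σ (fun σ' => prodM μ σ' {x})]
      exact Finset.sum_congr rfl fun π _ => hsing μ _ x
    rw [h1, h2]
  have keyP₀ := key μ₀
  have keyP₁ := key μ₁
  have hx0 : (cx : ℝ≥0∞) ≠ 0 := by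
    have : (1 : Equiv.Perm (Fin n)) ∈ ({π : Equiv.Perm (Fin n) | (fun j => x (π j)) = x} : Finset _) := by
      simp
    simp only [ne_eq, Nat.cast_eq_zero, hcx]
    exact Finset.card_ne_zero_of_mem this
  have hσ0 : (cσ : ℝ≥0∞) ≠ 0 := by
    have : (1 : Equiv.Perm (Fin n)) ∈ ({π : Equiv.Perm (Fin n) | (fun j => σ (π j)) = σ} : Finset _) := by
      simp
    simp only [ne_eq, Nat.cast_eq_zero, hcσ]
    exact Finset.card_ne_zero_of_mem this
  have hc0 : ((cx : ℝ≥0∞) * cσ) ≠ 0 := mul_ne_zero hx0 hσ0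
  have hct : ((cx : ℝ≥0∞) * cσ) ≠ ∞ := by
    exact ENNReal.mul_ne_top (ENNReal.natCast_ne_top _) (ENNReal.natCast_ne_top _)
  rw [← ENNReal.mul_right_inj hc0 hct]
  calc ((cx : ℝ≥0∞) * cσ) * (prodM μ₁ σ O * mixM μ₀ ν {x})
      = ((cx : ℝ≥0∞) * prodM μ₁ σ O) * ((cσ : ℝ≥0∞) * mixM μ₀ ν {x}) := by ring
    _ = ((cσ : ℝ≥0∞) * mixM μ₁ ν {x}) * ((cx : ℝ≥0∞) * prodM μ₀ σ O) := by
        rw [keyP₁, keyP₀]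
    _ = ((cx : ℝ≥0∞) * cσ) * (prodM μ₀ σ O * mixM μ₁ ν {x}) := by ring
end
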